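/- arXiv:1101.3563 — 5 statements merged into one kernel-verified Lean document; each statement's English description precedes it below -/
import Mathlib

section
/- Let V, R : ℝ → ℝ be differentiable functions on [n+2, ∞) (n ≥ 1 a real parameter) with V(c) > 0, 0 ≤ R(c) ≤ (n/2)·V(c), satisfying the ODE (n/2)·V(c) − R(c) = c·V'(c) − R'(c). Define P(c) = V(c)/c^(n/2) − R(c)/c^(n/2+1). Then P'(c) = −(1 − (n+2)/(2c))·R(c)/c^(n/2+1) for all c ≥ n+2. -/
open Real

theorem hasDerivAt_div_rpow_const {f : ℝ → ℝ} {f' x : ℝ} (a : ℝ) (hf : HasDerivAt f f' x)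
    (hx : 0 < x) :
    HasDerivAt (fun y => f y / y ^ a) ((x * f' - a * f x) / x ^ (a + 1)) x := by
  have hxa : x ^ a ≠ 0 := (rpow_pos_of_pos hx a).ne'
  refine (hf.div (hasDerivAt_rpow_const (p := a) (Or.inl hx.ne')) hxa).congr_deriv ?_
  rw [rpow_add hx, rpow_sub_one hx.ne', rpow_one]
  field_simp

/-- The derivative involves `V'` and `R'` only through `c V' - R'`; substituting the ODE cancels
the `V` terms. -/
theorem hasDerivAt_div_rpow_sub_div_rpow_of_ode {V R : ℝ → ℝ} {V' R' c : ℝ} (k : ℝ)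
    (hV : HasDerivAt V V' c) (hR : HasDerivAt R R' c) (hc : 0 < c)
    (hode : k * V c - R c = c * V' - R') :
    HasDerivAt (fun x => V x / x ^ k - R x / x ^ (k + 1))
      (-(1 - (k + 1) / c) * R c / c ^ (k + 1)) c := by
  refine ((hasDerivAt_div_rpow_const k hV hc).sub
    (hasDerivAt_div_rpow_const (k + 1) hR hc)).congr_deriv ?_
  have hR' : R' = c * V' - (k * V c - R c) := by linarith
  rw [hR', rpow_add hc (k + 1), rpow_add hc k, rpow_one]
  have hck : c ^ k ≠ 0 := (rpow_pos_of_pos hc k).ne'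
  field_simp
  ring

theorem stmt_0_general (n : ℝ) (hn : 1 ≤ n) (V R V' R' : ℝ → ℝ)
    (hV : ∀ c ≥ n + 2, HasDerivAt V (V' c) c)
    (hR : ∀ c ≥ n + 2, HasDerivAt R (R' c) c)
    (hode : ∀ c ≥ n + 2, n / 2 * V c - R c = c * V' c - R' c) :
    ∀ c ≥ n + 2,
      HasDerivAt (fun c : ℝ => V c / c ^ (n / 2 : ℝ) - R c / c ^ (n / 2 + 1 : ℝ))
        (-(1 - (n + 2) / (2 * c)) * R c / c ^ (n / 2 + 1 : ℝ)) c := by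
  intro c hc
  have hderiv := hasDerivAt_div_rpow_sub_div_rpow_of_ode (n / 2) (hV c hc) (hR c hc)
    (by linarith) (hode c hc)
  convert hderiv using 3
  ring

theorem stmt_0 (n : ℝ) (hn : 1 ≤ n) (V R V' R' : ℝ → ℝ)
    (hV : ∀ c ≥ n + 2, HasDerivAt V (V' c) c)
    (hR : ∀ c ≥ n + 2, HasDerivAt R (R' c) c)
    (hVpos : ∀ c ≥ n + 2, 0 < V c)
    (hRnonneg : ∀ c ≥ n + 2, 0 ≤ R c)
    (hRle : ∀ c ≥ n + 2, R c ≤ n / 2 * V c)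
    (hode : ∀ c ≥ n + 2, n / 2 * V c - R c = c * V' c - R' c) :
    ∀ c ≥ n + 2,
      HasDerivAt (fun c : ℝ => V c / c ^ (n / 2 : ℝ) - R c / c ^ (n / 2 + 1 : ℝ))
        (-(1 - (n + 2) / (2 * c)) * R c / c ^ (n / 2 + 1 : ℝ)) c :=
  stmt_0_general n hn V R V' R' hV hR hode
end

section
/- Let n ≥ 1 and let V, R : [n+2, ∞) → ℝ be differentiable with V(c) > 0, 0 < R(c) ≤ (n/2)·V(c), satisfying (n/2)·V(c) − R(c) = c·V'(c) − R'(c). Define P(c) = V(c)/c^(n/2) − R(c)/c^(n/2+1) and N(c) = R(c)/(c·V(c)). Then lim_{c→∞} P(c) exists and is finite, and this limit is positive if and only if ∫_{n+2}^∞ N(c) dc < ∞. -/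
/-!
Put `W = c V - R`, which is positive since `R ≤ (n/2) V < c V`, so that the given expression is
`P = W / c ^ (n/2 + 1)`. The equation `(n/2) V - R = c V' - R'` says `W' = (n/2 + 1) V - R`, hence
`(log P)' = -f` with `f = (1 - (n+2)/(2c)) N / (1 - N)`, and `N/2 ≤ f ≤ 2N` on `[n+2, ∞)`.
Thus `P c = P (n+2) · exp (-∫_{n+2}^c f)`: the limit is positive when `f` is integrable, and
otherwise `∫ f → ∞` because `f ≥ 0`, so `P → 0`. By the comparison, `f` is integrable
iff `N` is.
-/

open Real Filter MeasureTheory Set Topology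

theorem integrableOn_iff_of_le_const_mul {α : Type*} [MeasurableSpace α] {μ : Measure α}
    {s : Set α} (hs : MeasurableSet s) {f g : α → ℝ} {C : ℝ}
    (hf : AEStronglyMeasurable f (μ.restrict s)) (hg : AEStronglyMeasurable g (μ.restrict s))
    (hf0 : ∀ x ∈ s, 0 ≤ f x) (hg0 : ∀ x ∈ s, 0 ≤ g x)
    (hfg : ∀ x ∈ s, f x ≤ C * g x) (hgf : ∀ x ∈ s, g x ≤ C * f x) :
    IntegrableOn f s μ ↔ IntegrableOn g s μ := by
  have integrableOn_of_le : ∀ {u v : α → ℝ}, AEStronglyMeasurable v (μ.restrict s) →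
      (∀ x ∈ s, 0 ≤ v x) → (∀ x ∈ s, v x ≤ C * u x) → IntegrableOn u s μ →
      IntegrableOn v s μ :=
    fun hv hv0 hvu hu => (hu.const_mul C).mono' hv <| (ae_restrict_iff' hs).2 <|
      ae_of_all _ fun x hx => (norm_of_nonneg (hv0 x hx)).trans_le (hvu x hx)
  exact ⟨integrableOn_of_le hg hg0 hgf, integrableOn_of_le hf hf0 hfg⟩

section ImproperIntegral

variable {f : ℝ → ℝ} {a : ℝ}

theorem tendsto_intervalIntegral_atTop_of_not_integrableOn (hf : ContinuousOn f (Ici a))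
    (hf0 : ∀ x ≥ a, 0 ≤ f x) (hfi : ¬IntegrableOn f (Ioi a)) :
    Tendsto (fun c => ∫ x in a..c, f x) atTop atTop := by
  have hunbounded : ∀ M, ∃ c ≥ a, M < ∫ x in a..c, f x := by
    by_contra! hbounded
    obtain ⟨M, hM⟩ := hbounded
    refine hfi <| integrableOn_Ioi_of_intervalIntegral_norm_bounded M a
      (fun c => (hf.mono fun x hx => hx.1).integrableOn_Icc.mono_set Ioc_subset_Icc_self)
      tendsto_id ?_
    filter_upwards [eventually_ge_atTop a] with c hc
    rw [intervalIntegral.integral_congr fun x hx => norm_of_nonneg (hf0 x (uIcc_of_le hc ▸ hx).1)]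
    exact hM c hc
  rw [tendsto_atTop]
  intro M
  obtain ⟨c₀, hc₀, hM⟩ := hunbounded M
  filter_upwards [eventually_ge_atTop c₀] with c hc
  exact hM.le.trans <| intervalIntegral.integral_mono_interval le_rfl hc₀ hc
    (ae_restrict_of_forall_mem measurableSet_Ioc fun x hx => hf0 x hx.1.le)
    (hf.mono fun x hx => (uIcc_of_le (hc₀.trans hc) ▸ hx).1).intervalIntegrable

theorem exists_tendsto_exp_neg_intervalIntegral (hf : ContinuousOn f (Ici a))
    (hf0 : ∀ x ≥ a, 0 ≤ f x) :
    ∃ L, Tendsto (fun c => exp (-∫ x in a..c, f x)) atTop (𝓝 L) ∧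
      (0 < L ↔ IntegrableOn f (Ioi a)) := by
  by_cases hfi : IntegrableOn f (Ioi a)
  · exact ⟨_, (continuous_exp.tendsto _).comp
      (intervalIntegral_tendsto_integral_Ioi a hfi tendsto_id).neg, iff_of_true (exp_pos _) hfi⟩
  · exact ⟨0, tendsto_exp_atBot.comp <| tendsto_neg_atTop_atBot.comp <|
      tendsto_intervalIntegral_atTop_of_not_integrableOn hf hf0 hfi,
      iff_of_false (lt_irrefl 0) hfi⟩

theorem eq_mul_exp_neg_intervalIntegral_of_hasDerivAt {P : ℝ → ℝ} (hP : ∀ x ≥ a, 0 < P x)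
    (hP' : ∀ x ≥ a, HasDerivAt P (-f x * P x) x) (hf : ContinuousOn f (Ici a)) {c : ℝ}
    (hc : a ≤ c) : P c = P a * exp (-∫ x in a..c, f x) := by
  have hlog : ∫ x in a..c, -f x = log (P c) - log (P a) := by
    refine intervalIntegral.integral_eq_sub_of_hasDerivAt (f := fun x => log (P x))
      (fun x hx => ?_) (hf.mono fun x hx => (uIcc_of_le hc ▸ hx).1).intervalIntegrable.neg
    have hx : a ≤ x := (uIcc_of_le hc ▸ hx).1
    simpa only [mul_div_cancel_right₀ _ (hP x hx).ne'] using (hP' x hx).log (hP x hx).ne'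
  rw [intervalIntegral.integral_neg] at hlog
  rw [← exp_log (hP c hc), ← exp_log (hP a le_rfl), ← exp_add]
  congr 1
  linarith

theorem exists_tendsto_and_pos_iff_integrableOn_of_hasDerivAt {P N : ℝ → ℝ} {C : ℝ}
    (hP : ∀ x ≥ a, 0 < P x) (hP' : ∀ x ≥ a, HasDerivAt P (-f x * P x) x)
    (hf : ContinuousOn f (Ici a)) (hN : ContinuousOn N (Ici a))
    (hf0 : ∀ x ≥ a, 0 ≤ f x) (hN0 : ∀ x ≥ a, 0 ≤ N x)
    (hfN : ∀ x ≥ a, f x ≤ C * N x) (hNf : ∀ x ≥ a, N x ≤ C * f x) :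
    ∃ L, Tendsto P atTop (𝓝 L) ∧ (0 < L ↔ IntegrableOn N (Ioi a)) := by
  obtain ⟨L, hL, hLpos⟩ := exists_tendsto_exp_neg_intervalIntegral hf hf0
  refine ⟨P a * L, (hL.const_mul (P a)).congr' ?_, ?_⟩
  · filter_upwards [eventually_ge_atTop a] with c hc
    exact (eq_mul_exp_neg_intervalIntegral_of_hasDerivAt hP hP' hf hc).symm
  · rw [mul_pos_iff_of_pos_left (hP a le_rfl), hLpos]
    exact integrableOn_iff_of_le_const_mul measurableSet_Ioi
      ((hf.mono Ioi_subset_Ici_self).aestronglyMeasurable measurableSet_Ioi)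
      ((hN.mono Ioi_subset_Ici_self).aestronglyMeasurable measurableSet_Ioi)
      (fun x hx => hf0 x (le_of_lt hx)) (fun x hx => hN0 x (le_of_lt hx))
      (fun x hx => hfN x (le_of_lt hx)) (fun x hx => hNf x (le_of_lt hx))

end ImproperIntegral

/-- The rate `f = -P'/P`, i.e. `(1 - (n+2)/(2c)) N/(1 - N)` with `N = r/(c v)`,
`v = V c`, `r = R c`. -/
noncomputable def decayRate (n c v r : ℝ) : ℝ := r * (c - (n / 2 + 1)) / (c * (c * v - r))

section Soliton

variable {n c v r : ℝ}

theorem mul_sub_pos_of_le_half_mul (hc0 : 0 < c) (hc : n + 2 ≤ c) (hv : 0 < v)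
    (hr : r ≤ n / 2 * v) : 0 < c * v - r := by
  nlinarith

theorem decayRate_nonneg (hc0 : 0 < c) (hc : n + 2 ≤ c) (hv : 0 < v) (hr0 : 0 ≤ r)
    (hr : r ≤ n / 2 * v) : 0 ≤ decayRate n c v r :=
  div_nonneg (mul_nonneg hr0 (by linarith))
    (mul_pos hc0 (mul_sub_pos_of_le_half_mul hc0 hc hv hr)).le

theorem decayRate_le_two_mul (hc0 : 0 < c) (hc : n + 2 ≤ c) (hv : 0 < v) (hr0 : 0 ≤ r)
    (hr : r ≤ n / 2 * v) : decayRate n c v r ≤ 2 * (r / (c * v)) := by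
  have hW := mul_sub_pos_of_le_half_mul hc0 hc hv hr
  rw [decayRate, mul_div_assoc', div_le_div_iff₀ (mul_pos hc0 hW) (mul_pos hc0 hv)]
  have : 2 * r ≤ (c + (n / 2 + 1)) * v := by nlinarith
  nlinarith [mul_le_mul_of_nonneg_left this (mul_nonneg hc0.le hr0)]

theorem le_two_mul_decayRate (hc0 : 0 < c) (hc : n + 2 ≤ c) (hv : 0 < v) (hr0 : 0 ≤ r)
    (hr : r ≤ n / 2 * v) : r / (c * v) ≤ 2 * decayRate n c v r := by
  have hW := mul_sub_pos_of_le_half_mul hc0 hc hv hr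
  rw [decayRate, mul_div_assoc', div_le_div_iff₀ (mul_pos hc0 hv) (mul_pos hc0 hW)]
  have : 0 ≤ (c - (n + 2)) * v + r := by nlinarith
  nlinarith [mul_nonneg (mul_nonneg hc0.le hr0) this]

end Soliton

theorem div_rpow_sub_div_rpow_add_one {c : ℝ} (hc : 0 < c) (s v r : ℝ) :
    v / c ^ s - r / c ^ (s + 1) = (c * v - r) / c ^ (s + 1) := by
  rw [rpow_add_one hc.ne', sub_div, mul_comm c, mul_div_mul_right _ _ hc.ne']

theorem hasDerivAt_mul_sub_div_rpow {n c v' r' : ℝ} {V R : ℝ → ℝ} (hc : 0 < c)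
    (hV : HasDerivAt V v' c) (hR : HasDerivAt R r' c)
    (hode : n / 2 * V c - R c = c * v' - r') (hW : c * V c - R c ≠ 0) :
    HasDerivAt (fun x => (x * V x - R x) / x ^ (n / 2 + 1))
      (-decayRate n c (V c) (R c) * ((c * V c - R c) / c ^ (n / 2 + 1))) c := by
  have hW' : HasDerivAt (fun x => x * V x - R x) ((n / 2 + 1) * V c - R c) c := by
    refine (((hasDerivAt_id' c).fun_mul hV).fun_sub hR).congr_deriv ?_
    linarith
  refine (hW'.fun_div (hasDerivAt_rpow_const (p := n / 2 + 1) (Or.inl hc.ne'))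
    (rpow_pos_of_pos hc _).ne').congr_deriv ?_
  rw [decayRate, rpow_sub_one hc.ne']
  generalize hWdef : c * V c - R c = W at hW ⊢
  field_simp
  rw [← hWdef]
  ring

theorem stmt_5 (n : ℝ) (hn : 1 ≤ n) (V R V' R' : ℝ → ℝ)
    (hV : ∀ c ≥ n + 2, HasDerivAt V (V' c) c)
    (hR : ∀ c ≥ n + 2, HasDerivAt R (R' c) c)
    (hVpos : ∀ c ≥ n + 2, 0 < V c)
    (hRpos : ∀ c ≥ n + 2, 0 < R c)
    (hRle : ∀ c ≥ n + 2, R c ≤ n / 2 * V c)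
    (hode : ∀ c ≥ n + 2, n / 2 * V c - R c = c * V' c - R' c) :
    ∃ L : ℝ, Tendsto (fun c : ℝ => V c / c ^ (n / 2 : ℝ) - R c / c ^ (n / 2 + 1 : ℝ))
        atTop (nhds L) ∧
      (0 < L ↔ IntegrableOn (fun c => R c / (c * V c)) (Set.Ioi (n + 2))) := by
  have hc0 : ∀ c ≥ n + 2, 0 < c := fun c hc => by linarith
  have hW : ∀ c ≥ n + 2, 0 < c * V c - R c := fun c hc =>
    mul_sub_pos_of_le_half_mul (hc0 c hc) hc (hVpos c hc) (hRle c hc)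
  have hVc : ContinuousOn V (Ici (n + 2)) := fun c hc => (hV c hc).continuousAt.continuousWithinAt
  have hRc : ContinuousOn R (Ici (n + 2)) := fun c hc => (hR c hc).continuousAt.continuousWithinAt
  obtain ⟨L, hL, hLpos⟩ := exists_tendsto_and_pos_iff_integrableOn_of_hasDerivAt (C := 2)
    (P := fun c => (c * V c - R c) / c ^ (n / 2 + 1))
    (fun c hc => div_pos (hW c hc) (rpow_pos_of_pos (hc0 c hc) _))
    (fun c hc =>
      hasDerivAt_mul_sub_div_rpow (hc0 c hc) (hV c hc) (hR c hc) (hode c hc) (hW c hc).ne')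
    ((hRc.mul (continuousOn_id.sub continuousOn_const)).div
      (continuousOn_id.mul ((continuousOn_id.mul hVc).sub hRc))
      fun c hc => (mul_pos (hc0 c hc) (hW c hc)).ne')
    (hRc.div (continuousOn_id.mul hVc) fun c hc => (mul_pos (hc0 c hc) (hVpos c hc)).ne')
    (fun c hc => decayRate_nonneg (hc0 c hc) hc (hVpos c hc) (hRpos c hc).le (hRle c hc))
    (fun c hc => (div_pos (hRpos c hc) (mul_pos (hc0 c hc) (hVpos c hc))).le)
    (fun c hc => decayRate_le_two_mul (hc0 c hc) hc (hVpos c hc) (hRpos c hc).le (hRle c hc))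
    (fun c hc => le_two_mul_decayRate (hc0 c hc) hc (hVpos c hc) (hRpos c hc).le (hRle c hc))
  refine ⟨L, hL.congr' ?_, hLpos⟩
  filter_upwards [eventually_ge_atTop (n + 2)] with c hc
  exact (div_rpow_sub_div_rpow_add_one (hc0 c hc) _ _ _).symm
end

section
/- Let n ≥ 1 and suppose V, R : [n+2, ∞) → ℝ are differentiable, V(c) > 0, 0 ≤ R(c) ≤ (n/2)·V(c), and (n/2)·V(c) − R(c) = c·V'(c) − R'(c). If ∫_{n+2}^∞ R(c)/(c·V(c)) dc = ∞, then lim_{c→∞} V(c)/c^(n/2) = 0. -/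
open Real Filter MeasureTheory Set Topology

/-! Put `m = n / 2`. Along the ODE, `P(c) = V(c)/c^m - R(c)/c^(m+1)` has derivative
`-R(c) (c - (m + 1)) / c^(m+2)`, which for `c ≥ 2(m + 1)` is at most `-(N(c)/2) P(c)`; moreover
`V(c)/c^m ≤ 2 P(c)`. So `P` is nonnegative and decreasing, and if its limit `L` were positive then
`N ≤ -2P'/L` would be integrable. Hence `P → 0`, and `V(c)/c^m` is squeezed between `0` and `2P`. -/

theorem AntitoneOn.exists_tendsto_atTop_of_bddBelow {f : ℝ → ℝ} {a : ℝ}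
    (hf : AntitoneOn f (Ici a)) (hbdd : BddBelow (f '' Ici a)) :
    ∃ L, (∀ x ≥ a, L ≤ f x) ∧ Tendsto f atTop (𝓝 L) := by
  set F : ℝ → ℝ := fun x => f (max x a)
  have hF : Antitone F := fun x y hxy =>
    hf (le_max_right x a) (le_max_right y a) (max_le_max_right a hxy)
  have hFbdd : BddBelow (range F) :=
    hbdd.mono (range_subset_iff.2 fun x => mem_image_of_mem f (le_max_right x a))
  refine ⟨⨅ x, F x, fun x hx => ?_, (tendsto_atTop_ciInf hF hFbdd).congr' ?_⟩
  · simpa [F, max_eq_left hx] using ciInf_le hFbdd x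
  · filter_upwards [eventually_ge_atTop a] with x hx
    simp [F, max_eq_left hx]

theorem tendsto_zero_of_deriv_le_neg_mul {f f' g : ℝ → ℝ} {a : ℝ}
    (hf : ∀ x ≥ a, HasDerivAt f (f' x) x) (hf₀ : ∀ x ≥ a, 0 ≤ f x) (hg₀ : ∀ x ≥ a, 0 ≤ g x)
    (hf' : ∀ x ≥ a, f' x ≤ -(g x * f x)) (hgm : AEStronglyMeasurable g (volume.restrict (Ioi a)))
    (hg : ¬ IntegrableOn g (Ioi a)) : Tendsto f atTop (𝓝 0) := by
  have hf'_nonpos : ∀ x ≥ a, f' x ≤ 0 := fun x hx =>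
    (hf' x hx).trans (neg_nonpos.2 (mul_nonneg (hg₀ x hx) (hf₀ x hx)))
  have hanti : AntitoneOn f (Ici a) := by
    refine antitoneOn_of_hasDerivWithinAt_nonpos (f' := f') (convex_Ici a)
      (fun x hx => (hf x hx).continuousAt.continuousWithinAt) (fun x hx => ?_) (fun x hx => ?_)
    all_goals rw [interior_Ici] at hx
    · exact (hf x hx.le).hasDerivWithinAt
    · exact hf'_nonpos x hx.le
  obtain ⟨L, hLf, hlim⟩ := hanti.exists_tendsto_atTop_of_bddBelow
    ⟨0, by rintro _ ⟨x, hx, rfl⟩; exact hf₀ x hx⟩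
  obtain rfl | hL := (ge_of_tendsto hlim (eventually_ge_atTop a |>.mono hf₀)).eq_or_lt'
  · exact hlim
  -- Once `f ≥ L > 0`, `g ≤ -f' / L`, and `f'` is integrable because `f` has a limit.
  have hf'_int : IntegrableOn f' (Ioi a) :=
    integrableOn_Ioi_deriv_of_nonpos' hf (fun x hx => hf'_nonpos x hx.out.le) hlim
  refine absurd (hf'_int.neg.const_mul L⁻¹ |>.mono' hgm ?_) hg
  filter_upwards [ae_restrict_mem measurableSet_Ioi] with x hx
  have hx : a ≤ x := le_of_lt hx
  rw [Real.norm_of_nonneg (hg₀ x hx), le_inv_mul_iff₀ hL, Pi.neg_apply]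
  nlinarith [hf' x hx, hLf x hx, hg₀ x hx]

theorem hasDerivAt_div_rpow_const_s6 {W : ℝ → ℝ} {W' c p : ℝ} (hW : HasDerivAt W W' c)
    (hc : 0 < c) : HasDerivAt (fun x => W x / x ^ p) ((W' * c - p * W c) / c ^ (p + 1)) c := by
  refine (hW.div (hasDerivAt_rpow_const (Or.inl hc.ne')) (rpow_pos_of_pos hc p).ne').congr_deriv ?_
  rw [rpow_sub_one hc.ne', rpow_add_one hc.ne']
  have := (rpow_pos_of_pos hc p).ne'
  field_simp

noncomputable section

namespace ChowLuYang

def N (V R : ℝ → ℝ) (c : ℝ) : ℝ := R c / (c * V c)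

def P (m : ℝ) (V R : ℝ → ℝ) (c : ℝ) : ℝ := V c / c ^ m - R c / c ^ (m + 1)

def P' (m : ℝ) (R : ℝ → ℝ) (c : ℝ) : ℝ := -(R c * (c - (m + 1))) / c ^ (m + 1 + 1)

variable {m : ℝ} {V R : ℝ → ℝ} {c : ℝ}

theorem N_nonneg (hc0 : 0 < c) (hV : 0 < V c) (hR : 0 ≤ R c) : 0 ≤ N V R c :=
  div_nonneg hR (mul_pos hc0 hV).le

theorem P_eq_div (hc : 0 < c) : P m V R c = (c * V c - R c) / c ^ (m + 1) := by
  have := (rpow_pos_of_pos hc m).ne'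
  rw [P, rpow_add_one hc.ne']
  field_simp

theorem hasDerivAt_P {v' r' : ℝ} (hc : 0 < c) (hV : HasDerivAt V v' c) (hR : HasDerivAt R r' c)
    (hode : m * V c - R c = c * v' - r') : HasDerivAt (P m V R) (P' m R c) c := by
  have hP : (fun x => (x * V x - R x) / x ^ (m + 1)) =ᶠ[𝓝 c] P m V R :=
    eventually_of_mem (Ioi_mem_nhds hc) fun x hx => (P_eq_div hx).symm
  have hW : HasDerivAt (fun x => x * V x - R x) (1 * V c + c * v' - r') c :=
    ((hasDerivAt_id' c).mul hV).sub hR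
  refine (hasDerivAt_div_rpow_const_s6 hW hc |>.congr_of_eventuallyEq hP.symm).congr_deriv ?_
  rw [P', add_assoc m 1 1]
  congr 1
  linear_combination (-c) * hode

theorem P'_le_neg_N_mul_P (hc0 : 0 < c) (hc : 2 * (m + 1) ≤ c) (hV : 0 < V c) (hR : 0 ≤ R c) :
    P' m R c ≤ -(N V R c / 2 * P m V R c) := by
  have hu := rpow_pos_of_pos hc0 m
  have key : -(N V R c / 2 * P m V R c) - P' m R c =
      R c * (V c * (c - 2 * (m + 1)) + R c) / (2 * V c * c ^ m * c ^ 2) := by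
    simp only [N, P, P', rpow_add_one hc0.ne']
    field_simp
    ring
  rw [← sub_nonneg, key]
  exact div_nonneg (mul_nonneg hR (by nlinarith)) (by positivity)

theorem div_rpow_le_two_mul_P (hc0 : 0 < c) (hc : 2 * m ≤ c) (hV : 0 ≤ V c)
    (hRle : R c ≤ m * V c) : V c / c ^ m ≤ 2 * P m V R c := by
  have hu := rpow_pos_of_pos hc0 m
  have key : 2 * P m V R c - V c / c ^ m = (c * V c - 2 * R c) / (c ^ m * c) := by
    rw [P, rpow_add_one hc0.ne']
    field_simp
    ring
  rw [← sub_nonneg, key]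
  exact div_nonneg (by nlinarith) (by positivity)

end ChowLuYang

end

open ChowLuYang

theorem stmt_6 (n : ℝ) (hn : 1 ≤ n) (V R V' R' : ℝ → ℝ)
    (hV : ∀ c ≥ n + 2, HasDerivAt V (V' c) c)
    (hR : ∀ c ≥ n + 2, HasDerivAt R (R' c) c)
    (hVpos : ∀ c ≥ n + 2, 0 < V c)
    (hRnonneg : ∀ c ≥ n + 2, 0 ≤ R c)
    (hRle : ∀ c ≥ n + 2, R c ≤ n / 2 * V c)
    (hode : ∀ c ≥ n + 2, n / 2 * V c - R c = c * V' c - R' c)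
    (hdiv : ¬ IntegrableOn (fun c => R c / (c * V c)) (Set.Ioi (n + 2))) :
    Tendsto (fun c : ℝ => V c / c ^ (n / 2 : ℝ)) atTop (nhds 0) := by
  have hc₀ : ∀ c ≥ n + 2, 0 < c := fun c hc => by linarith
  have hQ₀ : ∀ c ≥ n + 2, 0 ≤ V c / c ^ (n / 2) := fun c hc =>
    div_nonneg (hVpos c hc).le (rpow_pos_of_pos (hc₀ c hc) _).le
  have hQP : ∀ c ≥ n + 2, V c / c ^ (n / 2) ≤ 2 * P (n / 2) V R c := fun c hc =>
    div_rpow_le_two_mul_P (hc₀ c hc) (by linarith) (hVpos c hc).le (hRle c hc)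
  have hNm : ContinuousOn (fun c => N V R c / 2) (Ioi (n + 2)) := by
    refine ContinuousOn.div_const (ContinuousOn.div ?_ ?_ fun c hc => ?_) 2
    · exact fun c hc => (hR c hc.out.le).continuousAt.continuousWithinAt
    · exact continuousOn_id.mul fun c hc => (hV c hc.out.le).continuousAt.continuousWithinAt
    · exact (mul_pos (hc₀ c hc.out.le) (hVpos c hc.out.le)).ne'
  have hP : Tendsto (P (n / 2) V R) atTop (𝓝 0) := by
    refine tendsto_zero_of_deriv_le_neg_mul (a := n + 2)
      (fun c hc => hasDerivAt_P (hc₀ c hc) (hV c hc) (hR c hc) (hode c hc))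
      (fun c hc => by linarith [hQ₀ c hc, hQP c hc])
      (fun c hc => div_nonneg (N_nonneg (hc₀ c hc) (hVpos c hc) (hRnonneg c hc)) zero_le_two)
      (fun c hc => P'_le_neg_N_mul_P (hc₀ c hc) (by linarith) (hVpos c hc) (hRnonneg c hc))
      (hNm.aestronglyMeasurable measurableSet_Ioi) fun h => hdiv ?_
    simpa [N, mul_div_cancel₀, IntegrableOn] using h.const_mul 2
  exact squeeze_zero' (eventually_ge_atTop _ |>.mono hQ₀) (eventually_ge_atTop _ |>.mono hQP)
    (by simpa using hP.const_mul 2)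
end

section
/- Let n ≥ 1 and let V, R : [n+2, ∞) → ℝ be differentiable with V > 0, 0 ≤ R ≤ (n/2)V, and (n/2)V(c) − R(c) = c·V'(c) − R'(c). Then the function P(c) = V(c)/c^(n/2) − R(c)/c^(n/2+1) is nonincreasing on [n+2, ∞), and hence V(c) ≤ C·c^(n/2) for some constant C and all c ≥ n+2. -/
/-!
Writing `a = n/2`, the ODE `a V - R = c V' - R'` gives
`P'(c) = -(1 - (a + 1)/c) R(c) / c^(a+1)`, which is `≤ 0` once `c ≥ a + 1` because `R ≥ 0`.
Hence `P(c) ≤ P(n + 2)`, and since `R ≤ (n/2) V ≤ (c/2) V` the term `R/c^(a+1)` is at most half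
of `V/c^a`, so `V(c)/c^a ≤ 2 P(c) ≤ 2 P(n + 2)`.
-/

open Real Set

theorem hasDerivAt_div_rpow {f : ℝ → ℝ} {f' x : ℝ} (hf : HasDerivAt f f' x) (hx : 0 < x)
    (a : ℝ) :
    HasDerivAt (fun y => f y / y ^ a) ((x * f' - a * f x) / x ^ (a + 1)) x := by
  have hpow : HasDerivAt (fun y : ℝ => y ^ a) (a * x ^ (a - 1)) x :=
    hasDerivAt_rpow_const (Or.inl hx.ne')
  have hxa := rpow_pos_of_pos hx a
  refine (hf.div hpow hxa.ne').congr_deriv ?_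
  rw [rpow_add_one hx.ne', rpow_sub_one hx.ne']
  field_simp

section VolumeRatio

variable {a : ℝ} {V R V' R' : ℝ → ℝ} {c : ℝ}

theorem hasDerivAt_volumeRatio (hc : 0 < c) (hV : HasDerivAt V (V' c) c)
    (hR : HasDerivAt R (R' c) c) (hode : a * V c - R c = c * V' c - R' c) :
    HasDerivAt (fun x => V x / x ^ a - R x / x ^ (a + 1))
      (-(1 - (a + 1) / c) * R c / c ^ (a + 1)) c := by
  refine ((hasDerivAt_div_rpow hV hc a).sub (hasDerivAt_div_rpow hR hc (a + 1))).congr_deriv ?_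
  have hca := rpow_pos_of_pos hc a
  have hR' : R' c = c * V' c - a * V c + R c := by linarith
  simp only [rpow_add_one hc.ne', hR']
  field_simp
  ring

theorem antitoneOn_volumeRatio {c₀ : ℝ} (hc₀ : 0 < c₀) (ha : a + 1 ≤ c₀)
    (hV : ∀ c ≥ c₀, HasDerivAt V (V' c) c) (hR : ∀ c ≥ c₀, HasDerivAt R (R' c) c)
    (hRnonneg : ∀ c ≥ c₀, 0 ≤ R c) (hode : ∀ c ≥ c₀, a * V c - R c = c * V' c - R' c) :
    AntitoneOn (fun x => V x / x ^ a - R x / x ^ (a + 1)) (Ici c₀) := by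
  have hderiv (c : ℝ) (hc : c ≥ c₀) := hasDerivAt_volumeRatio (by linarith) (hV c hc) (hR c hc)
    (hode c hc)
  refine antitoneOn_of_hasDerivWithinAt_nonpos (convex_Ici c₀)
    (fun c hc => (hderiv c hc).continuousAt.continuousWithinAt)
    (fun c hc => (hderiv c (interior_subset hc)).hasDerivWithinAt) fun c hc => ?_
  have hc : c₀ ≤ c := interior_subset hc
  have hc0 : 0 < c := by linarith
  have hfactor : 0 ≤ 1 - (a + 1) / c := by
    rw [sub_nonneg, div_le_one hc0]
    linarith
  have hRc := hRnonneg c hc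
  have hca := rpow_pos_of_pos hc0 (a + 1)
  rw [neg_mul, neg_div]
  exact neg_nonpos.mpr (by positivity)

theorem div_rpow_le_two_mul_volumeRatio (hc : 0 < c) (hRle : R c ≤ c / 2 * V c) :
    V c / c ^ a ≤ 2 * (V c / c ^ a - R c / c ^ (a + 1)) := by
  have hca := rpow_pos_of_pos hc a
  have hRterm : R c / c ^ (a + 1) ≤ V c / c ^ a / 2 := by
    rw [rpow_add_one hc.ne', div_le_iff₀ (by positivity)]
    calc R c ≤ c / 2 * V c := hRle
      _ = V c / c ^ a / 2 * (c ^ a * c) := by field_simp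
  linarith

end VolumeRatio

theorem stmt_8_general (n : ℝ) (hn : 1 ≤ n) (V R V' R' : ℝ → ℝ)
    (hV : ∀ c ≥ n + 2, HasDerivAt V (V' c) c)
    (hR : ∀ c ≥ n + 2, HasDerivAt R (R' c) c)
    (hRnonneg : ∀ c ≥ n + 2, 0 ≤ R c)
    (hRle : ∀ c ≥ n + 2, R c ≤ n / 2 * V c)
    (hode : ∀ c ≥ n + 2, n / 2 * V c - R c = c * V' c - R' c) :
    AntitoneOn (fun c : ℝ => V c / c ^ (n / 2 : ℝ) - R c / c ^ (n / 2 + 1 : ℝ))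
        (Set.Ici (n + 2)) ∧
      ∃ C : ℝ, ∀ c ≥ n + 2, V c ≤ C * c ^ (n / 2 : ℝ) := by
  have hanti := antitoneOn_volumeRatio (by linarith) (by linarith) hV hR hRnonneg hode
  refine ⟨hanti, 2 * (V (n + 2) / (n + 2) ^ (n / 2) - R (n + 2) / (n + 2) ^ (n / 2 + 1)),
    fun c hc => ?_⟩
  have hc0 : 0 < c := by linarith
  have hpow := rpow_pos_of_pos hc0 (n / 2)
  have hVnonneg : 0 ≤ V c := by nlinarith [hRnonneg c hc, hRle c hc]
  have hRle' : R c ≤ c / 2 * V c := by nlinarith [hRle c hc]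
  have hratio : V c / c ^ (n / 2) ≤ 2 * (V (n + 2) / (n + 2) ^ (n / 2) -
      R (n + 2) / (n + 2) ^ (n / 2 + 1)) :=
    (div_rpow_le_two_mul_volumeRatio hc0 hRle').trans
      (by linarith [hanti self_mem_Ici hc hc])
  rwa [div_le_iff₀ hpow] at hratio

theorem stmt_8 (n : ℝ) (hn : 1 ≤ n) (V R V' R' : ℝ → ℝ)
    (hV : ∀ c ≥ n + 2, HasDerivAt V (V' c) c)
    (hR : ∀ c ≥ n + 2, HasDerivAt R (R' c) c)
    (hVpos : ∀ c ≥ n + 2, 0 < V c)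
    (hRnonneg : ∀ c ≥ n + 2, 0 ≤ R c)
    (hRle : ∀ c ≥ n + 2, R c ≤ n / 2 * V c)
    (hode : ∀ c ≥ n + 2, n / 2 * V c - R c = c * V' c - R' c) :
    AntitoneOn (fun c : ℝ => V c / c ^ (n / 2 : ℝ) - R c / c ^ (n / 2 + 1 : ℝ))
        (Set.Ici (n + 2)) ∧
      ∃ C : ℝ, ∀ c ≥ n + 2, V c ≤ C * c ^ (n / 2 : ℝ) :=
  stmt_8_general n hn V R V' R' hV hR hRnonneg hRle hode
end

section
/- Let n ≥ 1, a = n+2, and let N : [a, ∞) → ℝ be continuous with 0 ≤ N(c) ≤ n/(2c). Suppose P : [a, ∞) → (0, ∞) is differentiable and satisfies P'(c) = −(1 − (n+2)/(2c))·N(c)/(1 − N(c))·P(c). Then for all c ≥ a: P(a)·exp(−2∫_a^c N) ≤ P(c) ≤ P(a)·exp(−(1/2)∫_a^c N). -/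
/-! The logarithmic derivative of `P` is `-s N / (1 - N)` with `s = 1 - (n + 2) / (2c) ∈ [1/2, 1]`
and `0 ≤ N ≤ 1/2`, so it lies between `-2N` and `-N/2`; integrating `(log P)'` over `[n + 2, c]`
gives both bounds. -/

open Real intervalIntegral Set MeasureTheory

theorem integral_eq_log_sub_log_of_hasDerivAt {P g : ℝ → ℝ} {a b : ℝ} (hab : a ≤ b)
    (hpos : ∀ t ∈ Icc a b, 0 < P t) (hP : ∀ t ∈ Icc a b, HasDerivAt P (g t * P t) t)
    (hg : IntervalIntegrable g volume a b) :
    ∫ t in a..b, g t = log (P b) - log (P a) := by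
  refine integral_eq_sub_of_hasDerivAt (f := fun t => log (P t)) (fun t ht => ?_) hg
  rw [uIcc_of_le hab] at ht
  simpa only [mul_div_cancel_right₀ _ (hpos t ht).ne'] using (hP t ht).log (hpos t ht).ne'

theorem le_mul_exp_integral_of_hasDerivAt {P g h : ℝ → ℝ} {a b : ℝ} (hab : a ≤ b)
    (hpos : ∀ t ∈ Icc a b, 0 < P t) (hP : ∀ t ∈ Icc a b, HasDerivAt P (g t * P t) t)
    (hg : IntervalIntegrable g volume a b) (hh : IntervalIntegrable h volume a b)
    (hgh : ∀ t ∈ Icc a b, g t ≤ h t) :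
    P b ≤ P a * exp (∫ t in a..b, h t) := by
  have hlog := integral_eq_log_sub_log_of_hasDerivAt hab hpos hP hg
  have hint := integral_mono_on hab hg hh hgh
  rw [← exp_log (hpos a (left_mem_Icc.2 hab)), ← exp_add, ← exp_log (hpos b (right_mem_Icc.2 hab))]
  exact exp_le_exp.2 (by linarith)

theorem mul_exp_integral_le_of_hasDerivAt {P g h : ℝ → ℝ} {a b : ℝ} (hab : a ≤ b)
    (hpos : ∀ t ∈ Icc a b, 0 < P t) (hP : ∀ t ∈ Icc a b, HasDerivAt P (g t * P t) t)
    (hg : IntervalIntegrable g volume a b) (hh : IntervalIntegrable h volume a b)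
    (hhg : ∀ t ∈ Icc a b, h t ≤ g t) :
    P a * exp (∫ t in a..b, h t) ≤ P b := by
  have hlog := integral_eq_log_sub_log_of_hasDerivAt hab hpos hP hg
  have hint := integral_mono_on hab hh hg hhg
  rw [← exp_log (hpos a (left_mem_Icc.2 hab)), ← exp_add, ← exp_log (hpos b (right_mem_Icc.2 hab))]
  exact exp_le_exp.2 (by linarith)

theorem neg_two_mul_le_neg_mul_div_one_sub {s x : ℝ} (hs : s ≤ 1) (hx₀ : 0 ≤ x)
    (hx : x ≤ 1 / 2) : -2 * x ≤ -s * x / (1 - x) := by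
  rw [le_div_iff₀ (by linarith)]
  nlinarith

theorem neg_mul_div_one_sub_le_neg_half_mul {s x : ℝ} (hs : 1 / 2 ≤ s) (hx₀ : 0 ≤ x)
    (hx : x < 1) : -s * x / (1 - x) ≤ -(1 / 2) * x := by
  rw [div_le_iff₀ (by linarith)]
  nlinarith

theorem div_two_mul_le_half {m t : ℝ} (ht : 0 < t) (hmt : m ≤ t) : m / (2 * t) ≤ 1 / 2 := by
  rw [div_le_iff₀ (by positivity)]
  linarith

theorem stmt_15 (n : ℝ) (hn : 1 ≤ n) (N P : ℝ → ℝ)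
    (hNcont : ContinuousOn N (Set.Ici (n + 2)))
    (hNnonneg : ∀ c ≥ n + 2, 0 ≤ N c)
    (hNle : ∀ c ≥ n + 2, N c ≤ n / (2 * c))
    (hPpos : ∀ c ≥ n + 2, 0 < P c)
    (hP : ∀ c ≥ n + 2,
      HasDerivAt P (-(1 - (n + 2) / (2 * c)) * N c / (1 - N c) * P c) c) :
    ∀ c ≥ n + 2,
      P (n + 2) * Real.exp (-2 * ∫ t in (n + 2)..c, N t) ≤ P c ∧
      P c ≤ P (n + 2) * Real.exp (-(1 / 2) * ∫ t in (n + 2)..c, N t) := by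
  intro c hc
  set g : ℝ → ℝ := fun t => -(1 - (n + 2) / (2 * t)) * N t / (1 - N t)
  have hsmall : ∀ t ∈ Icc (n + 2) c,
      0 < t ∧ N t ≤ 1 / 2 ∧ 0 ≤ (n + 2) / (2 * t) ∧ (n + 2) / (2 * t) ≤ 1 / 2 := by
    intro t ⟨ht, _⟩
    have ht₀ : 0 < t := by linarith
    exact ⟨ht₀, (hNle t ht).trans (div_two_mul_le_half ht₀ (by linarith)), by positivity,
      div_two_mul_le_half ht₀ ht⟩
  have hN : ContinuousOn N (Icc (n + 2) c) := hNcont.mono Icc_subset_Ici_self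
  have hgcont : ContinuousOn g (Icc (n + 2) c) := by
    have h2t : ∀ t ∈ Icc (n + 2) c, 2 * t ≠ 0 := fun t ht => (mul_pos two_pos (hsmall t ht).1).ne'
    have hN1 : ∀ t ∈ Icc (n + 2) c, 1 - N t ≠ 0 := fun t ht =>
      (sub_pos.2 ((hsmall t ht).2.1.trans_lt one_half_lt_one)).ne'
    fun_prop (disch := assumption)
  have hNint := hN.intervalIntegrable_of_Icc (μ := volume) hc
  have hgint := hgcont.intervalIntegrable_of_Icc (μ := volume) hc
  have hpos : ∀ t ∈ Icc (n + 2) c, 0 < P t := fun t ht => hPpos t ht.1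
  have hderiv : ∀ t ∈ Icc (n + 2) c, HasDerivAt P (g t * P t) t := fun t ht => hP t ht.1
  constructor
  · rw [← intervalIntegral.integral_const_mul]
    refine mul_exp_integral_le_of_hasDerivAt hc hpos hderiv hgint (hNint.const_mul _)
      fun t ht => ?_
    obtain ⟨-, hN₁, hq₀, -⟩ := hsmall t ht
    exact neg_two_mul_le_neg_mul_div_one_sub (by linarith) (hNnonneg t ht.1) hN₁
  · rw [← intervalIntegral.integral_const_mul]
    refine le_mul_exp_integral_of_hasDerivAt hc hpos hderiv hgint (hNint.const_mul _)
      fun t ht => ?_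
    obtain ⟨-, hN₁, -, hq₁⟩ := hsmall t ht
    exact neg_mul_div_one_sub_le_neg_half_mul (by linarith) (hNnonneg t ht.1) (by linarith)
end
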